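/- arXiv:2502.01831 — 2 statements merged into one kernel-verified Lean document; each statement's English description precedes it below -/
import Mathlib

section
/- For every α > 0, the sum over all monotone non-decreasing finite integer sequences (t₁,…,t_N) of e^{-α·Σ|t_j|} is at most C_α := (1-e^{-α})^{-1} · (∏_{n=1}^∞ (1-e^{-αn})^{-1})², uniformly in N. -/
/-! A monotone integer sequence `t` of length `N` is determined by its negative part read
backwards, `j ↦ max 0 (-t (N-1-j))`, and its nonnegative part `j ↦ max 0 (t j)`: two monotone
sequences in `ℕ` of length `N` whose entries add up to `∑ |t j|`. Monotone `ℕ`-sequences of length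
`N` are partitions into at most `N` parts, so with `q = e^{-α}` their generating function is
`∏_{k ≤ N} (1 - q^k)⁻¹ ≤ ∏_{k ≥ 1} (1 - q^k)⁻¹`. Hence the sum is at most the square of the
partition product, and `(1 - q)⁻¹ ≥ 1`. -/

open Real

/-- The constant `C_α = (1-e^{-α})⁻¹ (∏_{n=1}^∞ (1-e^{-αn})^{-1})²`. -/
noncomputable def Calpha (α : ℝ) : ℝ :=
  (1 - Real.exp (-α))⁻¹ * (∏' n : ℕ, (1 - Real.exp (-α * (n + 1)))⁻¹) ^ 2

open Finset

def monotoneFinSuccEquiv (N : ℕ) :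
    {f : Fin (N + 1) → ℕ // Monotone f} ≃ ℕ × {f : Fin N → ℕ // Monotone f} where
  toFun f := (f.1 0, ⟨fun j => f.1 j.succ - f.1 0,
    fun _ _ h => Nat.sub_le_sub_right (f.2 (Fin.succ_le_succ_iff.2 h)) _⟩)
  invFun p := ⟨Fin.cons p.1 fun j => p.1 + p.2.1 j,
    (monotone_iff_forall_lt.trans (Fin.liftFun_cons (· ≤ ·))).2
      ⟨fun _ => Nat.le_add_right _ _, fun _ _ h => Nat.add_le_add_left (p.2.2 h.le) _⟩⟩
  left_inv f := by
    ext j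
    cases j using Fin.cases with
    | zero => rfl
    | succ k => simpa using Nat.add_sub_cancel' (f.2 (Fin.zero_le k.succ))
  right_inv p := by ext <;> simp

theorem sum_monotoneFinSuccEquiv_symm (N : ℕ) (p : ℕ × {f : Fin N → ℕ // Monotone f}) :
    ∑ j, ((monotoneFinSuccEquiv N).symm p).1 j = (N + 1) * p.1 + ∑ j, p.2.1 j := by
  simp only [monotoneFinSuccEquiv, Equiv.symm_mk, Equiv.coe_fn_mk, Fin.sum_univ_succ,
    Fin.cons_zero, Fin.cons_succ, sum_add_distrib, sum_const, card_univ, Fintype.card_fin,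
    smul_eq_mul]
  ring

theorem hasSum_pow_sum_monotone {q : ℝ} (hq0 : 0 ≤ q) (hq1 : q < 1) (N : ℕ) :
    HasSum (fun f : {f : Fin N → ℕ // Monotone f} => q ^ ∑ j, f.1 j)
      (∏ k ∈ range N, (1 - q ^ (k + 1))⁻¹) := by
  induction N with
  | zero =>
    have : Unique {f : Fin 0 → ℕ // Monotone f} :=
      ⟨⟨⟨finZeroElim, fun a => a.elim0⟩⟩, fun _ => Subtype.ext (funext finZeroElim)⟩
    simp
  | succ N ih =>
    have hgeom : HasSum (fun m : ℕ => (q ^ (N + 1)) ^ m) (1 - q ^ (N + 1))⁻¹ :=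
      hasSum_geometric_of_lt_one (pow_nonneg hq0 _) (pow_lt_one₀ hq0 hq1 N.succ_ne_zero)
    have hweight : (fun f : {f : Fin (N + 1) → ℕ // Monotone f} => q ^ ∑ j, f.1 j) ∘
        (monotoneFinSuccEquiv N).symm = fun p => (q ^ (N + 1)) ^ p.1 * q ^ ∑ j, p.2.1 j := by
      ext p
      simp only [Function.comp_apply, sum_monotoneFinSuccEquiv_symm, pow_add, pow_mul]
    rw [← (monotoneFinSuccEquiv N).symm.hasSum_iff, hweight, prod_range_succ,
      mul_comm (∏ k ∈ range N, _)]
    have hsum := hgeom.summable.mul_of_nonneg ih.summable (fun _ => by positivity)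
      fun _ => by positivity
    exact (hgeom.mul ih hsum :)

theorem one_le_inv_one_sub_pow {q : ℝ} (hq0 : 0 ≤ q) (hq1 : q < 1) (n : ℕ) :
    1 ≤ (1 - q ^ (n + 1))⁻¹ :=
  (one_le_inv₀ (sub_pos.2 (pow_lt_one₀ hq0 hq1 n.succ_ne_zero))).2
    (sub_le_self _ (pow_nonneg hq0 _))

theorem multipliable_inv_one_sub_pow {q : ℝ} (hq0 : 0 ≤ q) (hq1 : q < 1) :
    Multipliable fun n : ℕ => (1 - q ^ (n + 1))⁻¹ := by
  have hpos (n : ℕ) : 0 < 1 - q ^ (n + 1) := sub_pos.2 (pow_lt_one₀ hq0 hq1 n.succ_ne_zero)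
  have hsummable : Summable fun n : ℕ => (1 - q ^ (n + 1))⁻¹ - 1 := by
    refine Summable.of_nonneg_of_le (fun n => sub_nonneg.2 (one_le_inv_one_sub_pow hq0 hq1 n))
      (fun n => ?_) (((summable_geometric_of_lt_one hq0 hq1).mul_left q).div_const (1 - q))
    have hqn : q ^ (n + 1) ≤ q := pow_le_of_le_one hq0 hq1.le n.succ_ne_zero
    calc (1 - q ^ (n + 1))⁻¹ - 1 = q ^ (n + 1) / (1 - q ^ (n + 1)) := by
          field_simp [(hpos n).ne']
          ring
      _ ≤ q ^ (n + 1) / (1 - q) := by gcongr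
      _ = q * q ^ n / (1 - q) := by rw [pow_succ']
  simpa using Real.multipliable_one_add_of_summable hsummable

theorem prod_range_le_tprod_of_one_le {f : ℕ → ℝ} (hf : ∀ n, 1 ≤ f n) (hmul : Multipliable f)
    (N : ℕ) : ∏ n ∈ range N, f n ≤ ∏' n, f n := by
  have hmono : Monotone fun N => ∏ n ∈ range N, f n := monotone_nat_of_le_succ fun n => by
    rw [prod_range_succ]
    exact le_mul_of_one_le_right (prod_nonneg fun k _ => zero_le_one.trans (hf k)) (hf n)
  exact hmono.ge_of_tendsto hmul.tendsto_prod_tprod_nat N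

def monotoneSignSplit (N : ℕ) (t : {f : Fin N → ℤ // Monotone f}) :
    {f : Fin N → ℕ // Monotone f} × {f : Fin N → ℕ // Monotone f} :=
  (⟨fun j => (-t.1 j.rev).toNat,
      fun _ _ h => Int.toNat_le_toNat (neg_le_neg (t.2 (Fin.rev_le_rev.2 h)))⟩,
    ⟨fun j => (t.1 j).toNat, fun _ _ h => Int.toNat_le_toNat (t.2 h)⟩)

theorem monotoneSignSplit_injective (N : ℕ) : Function.Injective (monotoneSignSplit N) := by
  intro t s h
  ext j
  have hneg := congrFun (congrArg (fun p => p.1.1) h) j.rev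
  have hpos := congrFun (congrArg (fun p => p.2.1) h) j
  simp only [monotoneSignSplit, Fin.rev_rev] at hneg hpos
  omega

theorem sum_natAbs_eq_sum_monotoneSignSplit (N : ℕ) (t : {f : Fin N → ℤ // Monotone f}) :
    ∑ j, (t.1 j).natAbs =
      ∑ j, (monotoneSignSplit N t).1.1 j + ∑ j, (monotoneSignSplit N t).2.1 j := by
  have hrev : ∑ j : Fin N, (-t.1 j.rev).toNat = ∑ j : Fin N, (-t.1 j).toNat :=
    Fintype.sum_equiv Fin.revPerm _ _ fun _ => rfl
  simp only [monotoneSignSplit, hrev, ← sum_add_distrib]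
  exact sum_congr rfl fun j _ => by omega

theorem tsum_pow_sum_natAbs_monotone_le {q : ℝ} (hq0 : 0 ≤ q) (hq1 : q < 1) (N : ℕ) :
    ∑' t : {f : Fin N → ℤ // Monotone f}, q ^ ∑ j, (t.1 j).natAbs
      ≤ (∏' n : ℕ, (1 - q ^ (n + 1))⁻¹) ^ 2 := by
  have hS := hasSum_pow_sum_monotone hq0 hq1 N
  have hnonneg : 0 ≤ fun f : {f : Fin N → ℕ // Monotone f} => q ^ ∑ j, f.1 j :=
    fun _ => pow_nonneg hq0 _
  have hsummable := hS.summable.mul_of_nonneg hS.summable hnonneg hnonneg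
  have hpairs := hS.mul hS hsummable
  have hfactor := one_le_inv_one_sub_pow hq0 hq1
  have hA := prod_range_le_tprod_of_one_le hfactor (multipliable_inv_one_sub_pow hq0 hq1) N
  calc ∑' t : {f : Fin N → ℤ // Monotone f}, q ^ ∑ j, (t.1 j).natAbs
      = ∑' t, ((fun p : {f : Fin N → ℕ // Monotone f} × {f : Fin N → ℕ // Monotone f} =>
          q ^ (∑ j, p.1.1 j) * q ^ (∑ j, p.2.1 j)) ∘ monotoneSignSplit N) t := by
        simp only [Function.comp_apply, sum_natAbs_eq_sum_monotoneSignSplit, pow_add]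
    _ ≤ ∑' p : {f : Fin N → ℕ // Monotone f} × {f : Fin N → ℕ // Monotone f},
          q ^ (∑ j, p.1.1 j) * q ^ (∑ j, p.2.1 j) :=
        tsum_comp_le_tsum_of_inj hpairs.summable (fun _ => by positivity)
          (monotoneSignSplit_injective N)
    _ ≤ (∏' n : ℕ, (1 - q ^ (n + 1))⁻¹) ^ 2 := by
        rw [hpairs.tsum_eq, ← sq]
        exact pow_le_pow_left₀ (prod_nonneg fun k _ => zero_le_one.trans (hfactor k)) hA 2

theorem Calpha_eq (α : ℝ) :
    Calpha α = (1 - exp (-α))⁻¹ * (∏' n : ℕ, (1 - exp (-α) ^ (n + 1))⁻¹) ^ 2 := by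
  simp only [Calpha, ← Real.exp_nat_mul, Nat.cast_add, Nat.cast_one, mul_comm]

/-- For every `α > 0`, the sum over all monotone non-decreasing finite integer sequences
`(t₁,…,t_N)` of `e^{-α Σ|t_j|}` is at most `C_α`, uniformly in `N`. -/
theorem monotone_sequences_exp_sum_bound (α : ℝ) (hα : 0 < α) (N : ℕ) :
    ∑' t : { f : Fin N → ℤ // Monotone f },
      Real.exp (-α * ∑ j : Fin N, |((t.1 j : ℝ))|) ≤ Calpha α := by
  set q := exp (-α)
  have hq0 : 0 ≤ q := (exp_pos _).le
  have hq1 : q < 1 := exp_lt_one_iff.2 (neg_lt_zero.2 hα)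
  have hweight (t : { f : Fin N → ℤ // Monotone f }) :
      exp (-α * ∑ j, |((t.1 j : ℝ))|) = q ^ ∑ j, (t.1 j).natAbs := by
    rw [← exp_nat_mul]
    push_cast [Nat.cast_natAbs]
    ring_nf
  rw [tsum_congr hweight, Calpha_eq]
  have hP := tsum_pow_sum_natAbs_monotone_le hq0 hq1 N
  have hq_factor : 1 ≤ (1 - q)⁻¹ := by simpa using one_le_inv_one_sub_pow hq0 hq1 0
  exact hP.trans (le_mul_of_one_le_left (sq_nonneg _) hq_factor)
end

section
/- Let N ≥ 1, 1 ≤ k ≤ N, and α > 0. Then sup over x ∈ P_{N,k}(ℤ) of Σ_{y ∈ P_{N,k}(ℤ)} e^{-α d_H(x,y)} ≤ C_{α,k} · N^{2k} for a constant C_{α,k} depending only on α and k. -/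
/-!
Put `β = α / 2k` and `w(p) = ∑_{a ∈ x} e^{-β |p - a|}`; translation invariance gives
`∑_{p ∈ T} w(p) ≤ N ∑_{q ∈ ℤ} e^{-β |q|}` for every finite `T ⊆ ℤ`. A set `y` with at most `k`
clusters is determined by its left and right cluster endpoints, at most `k` of each, so listing
them with repetitions is an injective code `y ↦ (p₁, …, p_{2k}) ∈ y^{2k}`. Every point of `y` lies
within `d_H(x, y)` of `x`, hence `e^{-α d_H(x, y)} = ∏ᵢ e^{-β d_H(x, y)} ≤ ∏ᵢ w(pᵢ)`, and summing
over distinct codes bounds the series by `(N ∑_q e^{-β |q|})^{2k}`.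
-/

open Real

/-- Number of clusters (maximal runs of consecutive integers) of a finite subset of `ℤ`,
counted via its right endpoints. -/
def numClusters (x : Finset ℤ) : ℕ := (x.filter fun i => i + 1 ∉ x).card

open Finset Metric

def clusterLeftEnds (y : Finset ℤ) : Finset ℤ := y.filter fun i => i - 1 ∉ y

def clusterRightEnds (y : Finset ℤ) : Finset ℤ := y.filter fun i => i + 1 ∉ y

lemma card_clusterRightEnds (y : Finset ℤ) : #(clusterRightEnds y) = numClusters y := rfl

lemma exists_mem_clusterRightEnds_Icc_subset {y : Finset ℤ} {i : ℤ} (hi : i ∈ y) :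
    ∃ r ∈ clusterRightEnds y, i ≤ r ∧ Icc i r ⊆ y := by
  set R := y.filter fun t => Icc i t ⊆ y
  have hiR : i ∈ R := mem_filter.2 ⟨hi, by simpa using hi⟩
  obtain ⟨hry, hiry⟩ := mem_filter.1 (R.max'_mem ⟨i, hiR⟩)
  refine ⟨R.max' ⟨i, hiR⟩, mem_filter.2 ⟨hry, fun hr1 => ?_⟩, R.le_max' i hiR, hiry⟩
  have : R.max' ⟨i, hiR⟩ + 1 ∈ R := by
    refine mem_filter.2 ⟨hr1, fun t ht => ?_⟩
    rcases (mem_Icc.1 ht).2.lt_or_eq with h | rfl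
    · exact hiry (mem_Icc.2 ⟨(mem_Icc.1 ht).1, by omega⟩)
    · exact hr1
  linarith [R.le_max' _ this]

lemma exists_mem_clusterLeftEnds_Icc_subset {y : Finset ℤ} {i : ℤ} (hi : i ∈ y) :
    ∃ l ∈ clusterLeftEnds y, l ≤ i ∧ Icc l i ⊆ y := by
  set L := y.filter fun t => Icc t i ⊆ y
  have hiL : i ∈ L := mem_filter.2 ⟨hi, by simpa using hi⟩
  obtain ⟨hly, hliy⟩ := mem_filter.1 (L.min'_mem ⟨i, hiL⟩)
  refine ⟨L.min' ⟨i, hiL⟩, mem_filter.2 ⟨hly, fun hl1 => ?_⟩, L.min'_le i hiL, hliy⟩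
  have : L.min' ⟨i, hiL⟩ - 1 ∈ L := by
    refine mem_filter.2 ⟨hl1, fun t ht => ?_⟩
    rcases (mem_Icc.1 ht).1.lt_or_eq with h | rfl
    · exact hliy (mem_Icc.2 ⟨by omega, (mem_Icc.1 ht).2⟩)
    · exact hl1
  linarith [L.min'_le _ this]

lemma subset_of_clusterEnds_subset {y y' : Finset ℤ}
    (hL : clusterLeftEnds y' ⊆ clusterLeftEnds y) (hR : clusterRightEnds y ⊆ clusterRightEnds y') :
    y ⊆ y' := by
  intro i hi
  obtain ⟨r, hr, hir, hiry⟩ := exists_mem_clusterRightEnds_Icc_subset hi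
  obtain ⟨l, hl, hlr, hlry'⟩ := exists_mem_clusterLeftEnds_Icc_subset (mem_filter.1 (hR hr)).1
  by_cases hli : l ≤ i
  · exact hlry' (mem_Icc.2 ⟨hli, hir⟩)
  · exact absurd (hiry (mem_Icc.2 ⟨by omega, by omega⟩)) (mem_filter.1 (hL hl)).2

lemma eq_of_clusterEnds_eq {y y' : Finset ℤ}
    (hL : clusterLeftEnds y = clusterLeftEnds y') (hR : clusterRightEnds y = clusterRightEnds y') :
    y = y' :=
  (subset_of_clusterEnds_subset hL.ge hR.le).antisymm (subset_of_clusterEnds_subset hL.le hR.ge)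

lemma card_clusterLeftEnds_le_numClusters (y : Finset ℤ) :
    #(clusterLeftEnds y) ≤ numClusters y := by
  -- each left end is sent to the right end of its cluster
  choose! r hr hlr hlry using fun l (hl : l ∈ clusterLeftEnds y) =>
    exists_mem_clusterRightEnds_Icc_subset (mem_filter.1 hl).1
  refine card_le_card_of_injOn r (fun l hl => hr l hl) fun l hl l' hl' h => ?_
  by_contra hne
  wlog hll' : l < l' generalizing l l'
  · exact this l' hl' l hl h.symm (Ne.symm hne) (by omega)
  exact (mem_filter.1 hl').2 (hlry l hl (mem_Icc.2 ⟨by omega, by have := hlr l' hl'; omega⟩))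

lemma Finset.exists_fin_range_eq_of_card_le {α : Type*} {s : Finset α} {k : ℕ} (hs : s.Nonempty)
    (hk : #s ≤ k) : ∃ u : Fin k → α, Set.range u = s := by
  have : Nonempty s := hs.to_subtype
  obtain ⟨e⟩ := Function.Embedding.nonempty_of_card_le
    (by simpa using hk : Fintype.card s ≤ Fintype.card (Fin k))
  refine ⟨fun i => (Function.invFun e i : s), ?_⟩
  rw [Set.range_comp' Subtype.val, (Function.invFun_surjective e.injective).range_eq]
  simp

lemma exists_injective_tuple_mem_of_numClusters_le (k : ℕ) :
    ∃ j : {y : Finset ℤ // y.Nonempty ∧ numClusters y ≤ k} → (Fin k ⊕ Fin k → ℤ),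
      Function.Injective j ∧ ∀ y i, j y i ∈ y.1 := by
  have hends : ∀ y : {y : Finset ℤ // y.Nonempty ∧ numClusters y ≤ k},
      ∃ u : Fin k ⊕ Fin k → ℤ, Set.range (u ∘ Sum.inl) = clusterLeftEnds y.1 ∧
        Set.range (u ∘ Sum.inr) = clusterRightEnds y.1 := by
    rintro ⟨y, ⟨i, hi⟩, hk⟩
    obtain ⟨l, hl, -⟩ := exists_mem_clusterLeftEnds_Icc_subset hi
    obtain ⟨r, hr, -⟩ := exists_mem_clusterRightEnds_Icc_subset hi
    obtain ⟨uL, huL⟩ :=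
      exists_fin_range_eq_of_card_le ⟨l, hl⟩ ((card_clusterLeftEnds_le_numClusters y).trans hk)
    obtain ⟨uR, huR⟩ :=
      exists_fin_range_eq_of_card_le ⟨r, hr⟩ ((card_clusterRightEnds y).trans_le hk)
    exact ⟨Sum.elim uL uR, huL, huR⟩
  choose j hjL hjR using hends
  refine ⟨j, fun y y' h => Subtype.ext (eq_of_clusterEnds_eq ?_ ?_), ?_⟩
  · rw [← coe_inj, ← hjL, ← hjL, h]
  · rw [← coe_inj, ← hjR, ← hjR, h]
  · rintro y (i | i)
    · have : j y (.inl i) ∈ (clusterLeftEnds y.1 : Set ℤ) := hjL y ▸ Set.mem_range_self i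
      exact (mem_filter.1 this).1
    · have : j y (.inr i) ∈ (clusterRightEnds y.1 : Set ℤ) := hjR y ▸ Set.mem_range_self i
      exact (mem_filter.1 this).1

lemma summable_exp_neg_mul_norm_int {β : ℝ} (hβ : 0 < β) :
    Summable fun q : ℤ => exp (-β * ‖q‖) := by
  have h : Summable fun n : ℕ => exp (n * -β) := summable_exp_nat_mul_iff.2 (neg_neg_iff_pos.2 hβ)
  refine .of_nat_of_neg ?_ ?_ <;> simpa [mul_comm] using h

lemma sum_exp_neg_mul_dist_le_tsum {β : ℝ} (hβ : 0 < β) (T : Finset ℤ) (a : ℤ) :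
    ∑ p ∈ T, exp (-β * dist p a) ≤ ∑' q : ℤ, exp (-β * ‖q‖) := by
  simp only [dist_eq_norm]
  have hshift : ∑' p : ℤ, exp (-β * ‖p - a‖) = ∑' q : ℤ, exp (-β * ‖q‖) := by
    simpa using (Equiv.subRight a).tsum_eq fun q => exp (-β * ‖q‖)
  rw [← hshift]
  have hsum := (summable_exp_neg_mul_norm_int hβ).comp_injective (sub_left_injective (b := a))
  exact hsum.sum_le_tsum T fun _ _ => (exp_pos _).le

lemma sum_sum_exp_neg_mul_dist_le {β : ℝ} (hβ : 0 < β) (x T : Finset ℤ) :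
    ∑ p ∈ T, ∑ a ∈ x, exp (-β * dist p a) ≤ #x * ∑' q : ℤ, exp (-β * ‖q‖) := by
  rw [sum_comm, ← nsmul_eq_mul]
  exact sum_le_card_nsmul _ _ _ fun a _ => sum_exp_neg_mul_dist_le_tsum hβ T a

lemma IsCompact.exists_dist_le_hausdorffDist {X : Type*} [PseudoMetricSpace X] {s t : Set X}
    (hs : IsCompact s) (hs' : s.Nonempty) (ht : Bornology.IsBounded t) {p : X} (hp : p ∈ t) :
    ∃ a ∈ s, dist p a ≤ hausdorffDist s t := by
  obtain ⟨a, ha, hpa⟩ := hs.exists_infDist_eq_dist hs' p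
  refine ⟨a, ha, hpa ▸ hausdorffDist_comm (s := s) ▸ infDist_le_hausdorffDist_of_mem hp ?_⟩
  exact hausdorffEDist_ne_top_of_nonempty_of_bounded ⟨p, hp⟩ hs' ht hs.isBounded

lemma exp_neg_mul_hausdorffDist_le_sum {X : Type*} [PseudoMetricSpace X] {β : ℝ} (hβ : 0 ≤ β)
    {x y : Finset X} (hx : x.Nonempty) {p : X} (hp : p ∈ y) :
    exp (-β * hausdorffDist (x : Set X) y) ≤ ∑ a ∈ x, exp (-β * dist p a) := by
  obtain ⟨a, ha, hpa⟩ :=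
    x.finite_toSet.isCompact.exists_dist_le_hausdorffDist (coe_nonempty.2 hx)
      y.finite_toSet.isBounded (mem_coe.2 hp)
  calc exp (-β * hausdorffDist (x : Set X) y) ≤ exp (-β * dist p a) :=
        exp_le_exp.2 (mul_le_mul_of_nonpos_left hpa (neg_nonpos.2 hβ))
    _ ≤ ∑ a ∈ x, exp (-β * dist p a) :=
        single_le_sum (f := fun a => exp (-β * dist p a)) (fun _ _ => (exp_pos _).le) ha

lemma Finset.sum_prod_apply_le_pow {ι α : Type*} [Fintype ι] {h : α → ℝ} {B : ℝ}
    (hh : ∀ a, 0 ≤ h a) (hB : ∀ T : Finset α, ∑ a ∈ T, h a ≤ B) (Z : Finset (ι → α)) :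
    ∑ u ∈ Z, ∏ i, h (u i) ≤ B ^ Fintype.card ι := by
  classical
  calc ∑ u ∈ Z, ∏ i, h (u i)
      ≤ ∑ u ∈ Fintype.piFinset fun i => Z.image (· i), ∏ i, h (u i) :=
        sum_le_sum_of_subset_of_nonneg (fun u hu => Fintype.mem_piFinset.2 fun i =>
          mem_image_of_mem _ hu) fun u _ _ => prod_nonneg fun i _ => hh _
    _ = ∏ i, ∑ a ∈ Z.image (· i), h a := (prod_univ_sum _ _).symm
    _ ≤ ∏ _i : ι, B := prod_le_prod (fun i _ => sum_nonneg fun a _ => hh a) fun i _ => hB _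
    _ = B ^ Fintype.card ι := by rw [prod_const, card_univ]

lemma tsum_le_pow_of_le_prod {Y ι α : Type*} [Fintype ι] {h : α → ℝ} {B : ℝ}
    (hh : ∀ a, 0 ≤ h a) (hB : ∀ T : Finset α, ∑ a ∈ T, h a ≤ B) {j : Y → ι → α}
    (hj : Function.Injective j) {f : Y → ℝ} (hf : ∀ y, f y ≤ ∏ i, h (j y i)) :
    ∑' y, f y ≤ B ^ Fintype.card ι := by
  classical
  refine tsum_le_of_sum_le' (pow_nonneg (by simpa using hB ∅) _) fun F => ?_
  calc ∑ y ∈ F, f y ≤ ∑ y ∈ F, ∏ i, h (j y i) := sum_le_sum fun y _ => hf y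
    _ = ∑ u ∈ F.image j, ∏ i, h (u i) :=
        (sum_image (f := fun u => ∏ i, h (u i)) fun _ _ _ _ h => hj h).symm
    _ ≤ B ^ Fintype.card ι := sum_prod_apply_le_pow hh hB _

/-- For every `α > 0` and `k ≥ 1` there is a constant `C = C_{α,k}` such that for all
`N ≥ 1` with `k ≤ N` and every `x ∈ P_{N,k}(ℤ)`,
`Σ_{y ∈ P_{N,k}(ℤ)} e^{-α d_H(x,y)} ≤ C · N^{2k}`. -/
theorem exp_sum_hausdorff_bound (α : ℝ) (hα : 0 < α) (k : ℕ) (hk : 1 ≤ k) :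
    ∃ C : ℝ, 0 < C ∧
      ∀ N : ℕ, 1 ≤ N → k ≤ N →
        ∀ x : Finset ℤ, x.card = N → numClusters x ≤ k →
          ∑' y : { y : Finset ℤ // y.card = N ∧ numClusters y ≤ k },
              Real.exp (-α * (EMetric.hausdorffEdist (x : Set ℤ) (y.1 : Set ℤ)).toReal)
            ≤ C * (N : ℝ) ^ (2 * k) := by
  have hk' : (0 : ℝ) < 2 * k := by norm_cast; omega
  set β : ℝ := α / (2 * k) with hβ_def
  have hβ : 0 < β := div_pos hα hk'
  set S := ∑' q : ℤ, exp (-β * ‖q‖)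
  have hS : 0 < S :=
    (summable_exp_neg_mul_norm_int hβ).tsum_pos (fun _ => (exp_pos _).le) 0 (exp_pos _)
  refine ⟨S ^ (2 * k), by positivity, fun N hN _ x hx _ => ?_⟩
  have hxne : x.Nonempty := card_pos.1 (by omega)
  obtain ⟨j, hj, hjy⟩ := exists_injective_tuple_mem_of_numClusters_le k
  have hsplit : ∀ D : ℝ, exp (-α * D) = ∏ _i : Fin k ⊕ Fin k, exp (-β * D) := by
    intro D
    rw [prod_const, card_univ, Fintype.card_sum, Fintype.card_fin, ← exp_nat_mul]
    congr 1
    rw [hβ_def]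
    push_cast
    field_simp
    ring
  let code (y : {y : Finset ℤ // y.card = N ∧ numClusters y ≤ k}) : Fin k ⊕ Fin k → ℤ :=
    j ⟨y.1, card_pos.1 (by rw [y.2.1]; omega), y.2.2⟩
  calc _ ≤ (#x * S) ^ Fintype.card (Fin k ⊕ Fin k) := by
        refine tsum_le_pow_of_le_prod (j := code) (fun p => sum_nonneg fun _ _ => (exp_pos _).le)
          (sum_sum_exp_neg_mul_dist_le hβ x) (fun _ _ h => by simpa [Subtype.ext_iff] using hj h)
          fun y => ?_
        rw [hsplit]
        exact prod_le_prod (fun _ _ => (exp_pos _).le)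
          fun i _ => exp_neg_mul_hausdorffDist_le_sum hβ.le hxne (hjy _ i)
    _ = S ^ (2 * k) * N ^ (2 * k) := by simp [hx]; ring
end
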